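/- arXiv:0705.3992 — 6 statements merged into one kernel-verified Lean document; each statement's English description precedes it below -/
import Mathlib

section
/- Let the random ensemble R_{m,n} be the uniform distribution over all binary m×n matrices. For each weight w with 0 ≤ w ≤ n, the expected number of stopping-set vectors of Hamming weight w, i.e. E[ #{x ∈ {0,1}^n : wt(x)=w and for every row h_i of H, h_i∘x ≠ 1} ], equals C(n,w)·(1 − w·2^{−w})^m. -/
/-- Integer inner product of two binary (Bool) vectors. -/
def ip {n : ℕ} (h x : Fin n → Bool) : ℕ :=
  ∑ i, if h i ∧ x i then 1 else 0

/-- Hamming weight of a binary vector. -/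
def wt {n : ℕ} (x : Fin n → Bool) : ℕ :=
  (Finset.univ.filter fun i => x i = true).card

/-- Number of stopping-set vectors of Hamming weight `w` of the matrix `H`. -/
def SSdist (m n w : ℕ) (H : Fin m → Fin n → Bool) : ℕ :=
  (Finset.univ.filter fun x : Fin n → Bool =>
    wt x = w ∧ ∀ i : Fin m, ip (H i) x ≠ 1).card

/-!
Double counting turns the expectation into `∑_{wt x = w} P(every row h of H has h∘x ≠ 1)`, and
the rows are independent, so each summand is the `m`-th power of the fraction of rows `h` with
`h∘x ≠ 1`. A row has `h∘x = 1` iff it meets the support of `x` in exactly one of its `w` places,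
which leaves `w · 2^(n-w)` of the `2^n` rows.
-/

open Finset

theorem card_filter_card_true_eq {α : Type*} [Fintype α] [DecidableEq α] (k : ℕ) :
    #{g : α → Bool | #{i | g i = true} = k} = (Fintype.card α).choose k := by
  rw [← card_univ, ← card_powersetCard]
  refine card_nbij' (fun g => ({i | g i = true} : Finset α)) (fun s i => decide (i ∈ s))
    ?_ ?_ ?_ ?_ <;> intro g hg <;> simp_all

theorem card_filter_forall_apply {ι β : Type*} [Fintype ι] [DecidableEq ι] [Fintype β]
    (P : β → Prop) [DecidablePred P] :
    #{f : ι → β | ∀ i, P (f i)} = #{b | P b} ^ Fintype.card ι := by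
  calc #{f : ι → β | ∀ i, P (f i)} = #(Fintype.piFinset fun _ : ι => {b | P b}) :=
        congrArg card (by ext f; simp)
    _ = #{b | P b} ^ Fintype.card ι := by simp

theorem card_filter_card_true_on_eq {α : Type*} [Fintype α] [DecidableEq α]
    (p : α → Prop) [DecidablePred p] (k : ℕ) :
    #{h : α → Bool | #{i | p i ∧ h i = true} = k}
      = (Fintype.card {i // p i}).choose k * 2 ^ Fintype.card {i // ¬ p i} := by
  let e := Equiv.piEquivPiSubtypeProd p (fun _ => Bool)
  have hsplit : ∀ h : α → Bool, #{i | p i ∧ h i = true} = #{j | (e h).1 j = true} := by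
    intro h
    simp only [e, Equiv.piEquivPiSubtypeProd_apply, ← Fintype.card_subtype]
    exact Fintype.card_congr (Equiv.subtypeSubtypeEquivSubtypeInter p (h · = true)).symm
  let split : {h : α → Bool // #{i | p i ∧ h i = true} = k}
      ≃ {g : {i // p i} → Bool // #{j | g j = true} = k} × ({i // ¬ p i} → Bool) :=
    (e.subtypeEquiv fun h => by rw [hsplit]).trans Equiv.prodSubtypeFstEquivSubtypeProd
  rw [← Fintype.card_subtype, Fintype.card_congr split, Fintype.card_prod,
    Fintype.card_subtype, card_filter_card_true_eq]
  simp

theorem ip_eq_card {n : ℕ} (h x : Fin n → Bool) : ip h x = #{i | x i = true ∧ h i = true} := by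
  simp only [ip, card_filter, and_comm]

theorem card_ip_eq_one {n : ℕ} (x : Fin n → Bool) :
    #{h | ip h x = 1} = wt x * 2 ^ (n - wt x) := by
  simp only [ip_eq_card, card_filter_card_true_on_eq, Nat.choose_one_right]
  rw [Fintype.card_subtype_compl, Fintype.card_subtype, Fintype.card_fin]
  rfl

theorem wt_le {n : ℕ} (x : Fin n → Bool) : wt x ≤ n :=
  (card_filter_le _ _).trans (card_fin n).le

theorem card_ip_ne_one_div_two_pow {n : ℕ} (x : Fin n → Bool) :
    (#{h | ip h x ≠ 1} : ℝ) / 2 ^ n = 1 - wt x * (2 : ℝ) ^ (-(wt x : ℝ)) := by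
  have hcompl := card_filter_add_card_filter_not (s := univ) (fun h : Fin n → Bool => ip h x = 1)
  rw [card_ip_eq_one, card_univ, Fintype.card_fun, Fintype.card_bool, Fintype.card_fin] at hcompl
  have hpow : (2 : ℝ) ^ (n - wt x) * 2 ^ wt x = 2 ^ n := by
    rw [← pow_add, Nat.sub_add_cancel (wt_le x)]
  have hne : (#{h | ip h x ≠ 1} : ℝ) = 2 ^ n - wt x * 2 ^ (n - wt x) := by
    rw [eq_sub_iff_add_eq']
    exact_mod_cast hcompl
  rw [hne, Real.rpow_neg_natCast, zpow_neg, zpow_natCast, ← hpow]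
  field_simp

theorem card_wt_eq (n w : ℕ) : #{x : Fin n → Bool | wt x = w} = n.choose w :=
  (card_filter_card_true_eq w).trans (by rw [Fintype.card_fin])

theorem sum_SSdist (m n w : ℕ) :
    ∑ H : Fin m → Fin n → Bool, SSdist m n w H
      = ∑ x : Fin n → Bool with wt x = w, #{h : Fin n → Bool | ip h x ≠ 1} ^ m := by
  simp only [SSdist, card_filter]
  rw [sum_comm, sum_filter]
  refine sum_congr rfl fun x _ => ?_
  by_cases hx : wt x = w
  · simp only [hx, true_and, if_true, ← card_filter]
    simpa using card_filter_forall_apply (ι := Fin m) fun h : Fin n → Bool => ip h x ≠ 1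
  · simp [hx]

theorem stmt2_general (m n w : ℕ) :
    (∑ H : Fin m → Fin n → Bool, (SSdist m n w H : ℝ)) / 2 ^ (m * n)
      = (n.choose w : ℝ) * (1 - (w : ℝ) * 2 ^ (-(w : ℝ))) ^ m := by
  rw [← Nat.cast_sum, sum_SSdist, Nat.cast_sum, pow_mul', sum_div,
    sum_congr rfl fun x hx => by
      rw [Nat.cast_pow, ← div_pow, card_ip_ne_one_div_two_pow, (mem_filter.1 hx).2],
    sum_const, card_wt_eq, nsmul_eq_mul]

theorem stmt2 (m n w : ℕ) (hw : w ≤ n) :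
    (∑ H : Fin m → Fin n → Bool, (SSdist m n w H : ℝ)) / 2 ^ (m * n)
      = (n.choose w : ℝ) * (1 - (w : ℝ) * 2 ^ (-(w : ℝ))) ^ m :=
  stmt2_general m n w
end

section
/- Fix a design rate R with 0 < R < 1 and a normalized weight ℓ with 0 < ℓ < 1. Then lim_{n→∞} (1/n) log₂ [ C(n, ⌊ℓn⌋) · (1 − ⌊ℓn⌋·2^{−⌊ℓn⌋})^{⌊(1−R)n⌋} ] = H(ℓ), where H is the binary entropy function H(x) = −x log₂ x − (1−x) log₂(1−x). -/
/-!
In the expansion `n ^ n = (k + (n - k)) ^ n = ∑ j, C(n, j) k ^ j (n - k) ^ (n - j)` the term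
`j = k` is the largest of the `n + 1` terms (consecutive terms have ratio
`(n - j) k / ((j + 1) (n - k))`, which is at least `1` exactly when `j < k`). Taking logarithms,
`log C(n, k) = n H(k / n) + O(log n)`, and `H(⌊ℓ n⌋ / n) → H(ℓ)` by continuity.
The second factor does not contribute: `k 2^(-k) → 0` as `k = ⌊ℓ n⌋ → ∞`, so its logarithm is
`o(1)`, while the exponent `⌊(1 - R) n⌋` is `O(n)`.
-/

open Filter

/-- The binary entropy function. -/
noncomputable def binH (x : ℝ) : ℝ := -x * Real.logb 2 x - (1 - x) * Real.logb 2 (1 - x)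

open Topology Real

theorem Nat.apply_le_apply_of_unimodal {α : Type*} [Preorder α] {f : ℕ → α} {k : ℕ}
    (hup : ∀ j < k, f j ≤ f (j + 1)) (hdown : ∀ j ≥ k, f (j + 1) ≤ f j) (j : ℕ) :
    f j ≤ f k := by
  rcases le_total j k with hjk | hkj
  · induction hjk using Nat.decreasingInduction with
    | self => exact le_rfl
    | of_succ i hi ih => exact (hup i hi).trans ih
  · exact antitoneOn_nat_Ici_of_succ_le hdown (le_refl k) hkj hkj

namespace Nat

variable {n k : ℕ}

theorem choose_succ_mul_pow_mul_pow_mul (n k : ℕ) {j : ℕ} (hj : j < n) :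
    n.choose (j + 1) * k ^ (j + 1) * (n - k) ^ (n - (j + 1)) * ((j + 1) * (n - k)) =
      n.choose j * k ^ j * (n - k) ^ (n - j) * ((n - j) * k) := by
  obtain ⟨d, hd⟩ : ∃ d, n - j = d + 1 := ⟨n - (j + 1), by omega⟩
  rw [show n - (j + 1) = d by omega, hd]
  calc _ = n.choose (j + 1) * (j + 1) * k ^ (j + 1) * (n - k) ^ (d + 1) := by ring
    _ = _ := by rw [choose_succ_right_eq, hd]; ring

theorem choose_mul_pow_mul_pow_le (hkn : k ≤ n) (j : ℕ) :
    n.choose j * k ^ j * (n - k) ^ (n - j) ≤ n.choose k * k ^ k * (n - k) ^ (n - k) := by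
  refine apply_le_apply_of_unimodal (f := fun j ↦ n.choose j * k ^ j * (n - k) ^ (n - j))
    (fun i hi ↦ ?_) (fun i hi ↦ ?_) j
  · have hrate : (i + 1) * (n - k) ≤ (n - i) * k := by
      rw [Nat.mul_comm (n - i)]
      exact Nat.mul_le_mul (by omega) (by omega)
    refine Nat.le_of_mul_le_mul_right ?_ (Nat.mul_pos (by omega) (by omega) : 0 < (n - i) * k)
    rw [← choose_succ_mul_pow_mul_pow_mul n k (by omega)]
    exact Nat.mul_le_mul_left _ hrate
  · rcases lt_or_ge i n with hin | hni
    · have hrate : (n - i) * k ≤ (i + 1) * (n - k) := by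
        rw [Nat.mul_comm (i + 1)]
        exact Nat.mul_le_mul (by omega) (by omega)
      refine Nat.le_of_mul_le_mul_right ?_ (Nat.mul_pos (by omega) (by omega) :
        0 < (i + 1) * (n - k))
      rw [choose_succ_mul_pow_mul_pow_mul n k hin]
      exact Nat.mul_le_mul_left _ hrate
    · simp [choose_eq_zero_of_lt (show n < i + 1 by omega)]

theorem pow_self_eq_sum_choose_mul_pow_mul_pow (hkn : k ≤ n) :
    n ^ n = ∑ j ∈ Finset.range (n + 1), n.choose j * k ^ j * (n - k) ^ (n - j) := by
  conv_lhs => rw [← Nat.add_sub_cancel' hkn, add_pow, Nat.add_sub_cancel' hkn]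
  exact Finset.sum_congr rfl fun j _ ↦ by rw [Nat.cast_id]; ring

theorem choose_mul_pow_mul_pow_le_pow_self (hkn : k ≤ n) :
    n.choose k * k ^ k * (n - k) ^ (n - k) ≤ n ^ n := by
  rw [pow_self_eq_sum_choose_mul_pow_mul_pow hkn]
  exact Finset.single_le_sum (f := fun j ↦ n.choose j * k ^ j * (n - k) ^ (n - j))
    (fun _ _ ↦ Nat.zero_le _) (Finset.mem_range.2 (by omega))

theorem pow_self_le_succ_mul_choose_mul_pow_mul_pow (hkn : k ≤ n) :
    n ^ n ≤ (n + 1) * (n.choose k * k ^ k * (n - k) ^ (n - k)) := by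
  rw [pow_self_eq_sum_choose_mul_pow_mul_pow hkn]
  simpa using Finset.sum_le_card_nsmul (Finset.range (n + 1)) _ _
    fun j _ ↦ choose_mul_pow_mul_pow_le hkn j

end Nat

namespace Real

theorem mul_log_div_eq (x : ℝ) {y : ℝ} (hy : y ≠ 0) : x * log (x / y) = x * log x - x * log y := by
  rcases eq_or_ne x 0 with rfl | hx
  · simp
  · rw [log_div hx hy, mul_sub]

theorem mul_binEntropy_div (x : ℝ) {y : ℝ} (hy : y ≠ 0) :
    y * binEntropy (x / y) = y * log y - x * log x - (y - x) * log (y - x) := by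
  have hsub : 1 - x / y = (y - x) / y := by field_simp
  rw [binEntropy_eq_negMulLog_add_negMulLog_one_sub, negMulLog, negMulLog, hsub]
  calc _ = -(y * (x / y)) * log (x / y) - y * ((y - x) / y) * log ((y - x) / y) := by ring
    _ = _ := by
      rw [mul_div_cancel₀ x hy, mul_div_cancel₀ _ hy, neg_mul, mul_log_div_eq x hy,
        mul_log_div_eq _ hy]
      ring

theorem abs_log_choose_sub_mul_binEntropy_le {n k : ℕ} (hkn : k ≤ n) :
    |log (n.choose k) - n * binEntropy (k / n)| ≤ log (n + 1) := by
  rcases Nat.eq_zero_or_pos n with rfl | hn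
  · obtain rfl : k = 0 := Nat.le_zero.1 hkn
    simp
  have hC : (0 : ℝ) < n.choose k := by exact_mod_cast Nat.choose_pos hkn
  have hk : (0 : ℝ) < (k : ℝ) ^ k := by exact_mod_cast Nat.pow_self_pos
  have hnk : (0 : ℝ) < ((n - k : ℕ) : ℝ) ^ (n - k) := by exact_mod_cast Nat.pow_self_pos
  set T := n.choose k * k ^ k * (n - k) ^ (n - k) with hT
  have hT_pos : (0 : ℝ) < T := by rw [hT]; push_cast; positivity
  have hlogT : log T = log (n.choose k) + k * log k + (n - k) * log (n - k) := by
    rw [hT, Nat.cast_mul, Nat.cast_mul, Nat.cast_pow, Nat.cast_pow,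
      log_mul (by positivity) hnk.ne', log_mul hC.ne' hk.ne', log_pow, log_pow,
      Nat.cast_sub hkn]
  have hentropy := mul_binEntropy_div (k : ℝ) (Nat.cast_ne_zero.2 hn.ne')
  have hupper : log T ≤ n * log n := by
    rw [← log_pow]
    exact log_le_log hT_pos (by exact_mod_cast Nat.choose_mul_pow_mul_pow_le_pow_self hkn)
  have hlower : n * log n ≤ log (n + 1) + log T := by
    rw [← log_pow, ← log_mul (by positivity) hT_pos.ne']
    exact log_le_log (by positivity)
      (by exact_mod_cast Nat.pow_self_le_succ_mul_choose_mul_pow_mul_pow hkn)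
  rw [abs_le]
  constructor <;> linarith

theorem tendsto_log_natCast_add_one_div :
    Tendsto (fun n : ℕ ↦ log (n + 1) / n) atTop (𝓝 0) := by
  have h := (tendsto_pow_log_div_mul_add_atTop 1 (-1) 1 one_ne_zero).comp
    (tendsto_atTop_add_const_right atTop 1 tendsto_natCast_atTop_atTop)
  refine h.congr fun n ↦ ?_
  simp

theorem tendsto_log_choose_div {k : ℕ → ℕ} {p : ℝ} (hkn : ∀ n, k n ≤ n)
    (hk : Tendsto (fun n ↦ (k n : ℝ) / n) atTop (𝓝 p)) :
    Tendsto (fun n : ℕ ↦ log (n.choose (k n)) / n) atTop (𝓝 (binEntropy p)) := by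
  have hentropy := (binEntropy_continuous.tendsto p).comp hk
  have herror : Tendsto (fun n : ℕ ↦ (log (n.choose (k n)) - n * binEntropy (k n / n)) / n)
      atTop (𝓝 0) := by
    refine squeeze_zero_norm (fun n ↦ ?_) tendsto_log_natCast_add_one_div
    rw [norm_div, Real.norm_natCast, Real.norm_eq_abs]
    exact div_le_div_of_nonneg_right (abs_log_choose_sub_mul_binEntropy_le (hkn n)) n.cast_nonneg
  have hsum := hentropy.add herror
  rw [add_zero] at hsum
  refine hsum.congr' ?_
  filter_upwards [eventually_ne_atTop 0] with n hn
  rw [Function.comp_apply]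
  field_simp
  ring

theorem tendsto_one_sub_natCast_mul_rpow_neg {b : ℝ} (hb : 1 < b) :
    Tendsto (fun j : ℕ ↦ 1 - j * b ^ (-(j : ℝ))) atTop (𝓝 1) := by
  have h := (tendsto_pow_const_div_const_pow_of_one_lt 1 hb).const_sub 1
  rw [sub_zero] at h
  refine h.congr fun j ↦ ?_
  rw [rpow_neg (by positivity), rpow_natCast, pow_one, div_eq_mul_inv]

theorem one_sub_natCast_mul_two_rpow_neg_pos (j : ℕ) : 0 < 1 - j * (2 : ℝ) ^ (-(j : ℝ)) := by
  rw [rpow_neg zero_le_two, rpow_natCast, ← div_eq_mul_inv, sub_pos, div_lt_one (by positivity)]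
  exact_mod_cast Nat.lt_two_pow_self

theorem tendsto_log_pow_div {x : ℕ → ℝ} {m : ℕ → ℕ} {C : ℝ}
    (hx : Tendsto x atTop (𝓝 1)) (hm : ∀ n, (m n : ℝ) ≤ C * n) :
    Tendsto (fun n ↦ log (x n ^ m n) / n) atTop (𝓝 0) := by
  have hlog : Tendsto (fun n ↦ C * |log (x n)|) atTop (𝓝 0) := by
    simpa using (((continuousAt_log one_ne_zero).tendsto.comp hx).abs).const_mul C
  refine squeeze_zero_norm' ?_ hlog
  filter_upwards [eventually_gt_atTop 0] with n hn
  have hn' : (0 : ℝ) < n := by exact_mod_cast hn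
  rw [log_pow, norm_div, norm_mul, Real.norm_natCast, Real.norm_natCast, Real.norm_eq_abs,
    div_le_iff₀ hn']
  calc (m n : ℝ) * |log (x n)| ≤ C * n * |log (x n)| := by gcongr; exact hm n
    _ = _ := by ring

end Real

theorem Nat.floor_mul_le_abs_mul (a : ℝ) (n : ℕ) : (⌊a * n⌋₊ : ℝ) ≤ |a| * n := by
  rcases le_total 0 (a * n) with h | h
  · exact (Nat.floor_le h).trans (by gcongr; exact le_abs_self a)
  · rw [Nat.floor_of_nonpos h, Nat.cast_zero]
    positivity

theorem binH_eq_binEntropy_div_log_two (x : ℝ) : binH x = binEntropy x / log 2 := by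
  rw [binH, binEntropy_eq_negMulLog_add_negMulLog_one_sub, negMulLog, negMulLog, logb, logb]
  ring

theorem stmt3_general (R ℓ : ℝ) (hl0 : 0 < ℓ) (hl1 : ℓ < 1) :
    Tendsto (fun n : ℕ =>
        (1 / (n : ℝ)) * Real.logb 2
          ((n.choose ⌊ℓ * n⌋₊ : ℝ)
            * (1 - (⌊ℓ * n⌋₊ : ℝ) * 2 ^ (-(⌊ℓ * n⌋₊ : ℝ))) ^ ⌊(1 - R) * n⌋₊))
      atTop (nhds (binH ℓ)) := by
  have hkn (n : ℕ) : ⌊ℓ * n⌋₊ ≤ n :=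
    Nat.floor_le_of_le (mul_le_of_le_one_left n.cast_nonneg hl1.le)
  have hchoose := tendsto_log_choose_div hkn
    ((tendsto_nat_floor_mul_div_atTop hl0.le).comp tendsto_natCast_atTop_atTop)
  have hpow := tendsto_log_pow_div
    ((tendsto_one_sub_natCast_mul_rpow_neg one_lt_two).comp (tendsto_nat_floor_mul_atTop ℓ hl0))
    (Nat.floor_mul_le_abs_mul (1 - R))
  rw [binH_eq_binEntropy_div_log_two]
  have hsum := (hchoose.add hpow).div_const (log 2)
  rw [add_zero] at hsum
  refine hsum.congr fun n ↦ ?_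
  have hC : (n.choose ⌊ℓ * n⌋₊ : ℝ) ≠ 0 := by exact_mod_cast (Nat.choose_pos (hkn n)).ne'
  have hbase := one_sub_natCast_mul_two_rpow_neg_pos ⌊ℓ * n⌋₊
  rw [logb, log_mul hC (pow_ne_zero _ hbase.ne')]
  simp only [Function.comp_apply]
  ring

theorem stmt3 (R ℓ : ℝ) (hR0 : 0 < R) (hR1 : R < 1) (hl0 : 0 < ℓ) (hl1 : ℓ < 1) :
    Tendsto (fun n : ℕ =>
        (1 / (n : ℝ)) * Real.logb 2
          ((n.choose ⌊ℓ * n⌋₊ : ℝ)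
            * (1 - (⌊ℓ * n⌋₊ : ℝ) * 2 ^ (-(⌊ℓ * n⌋₊ : ℝ))) ^ ⌊(1 - R) * n⌋₊))
      atTop (nhds (binH ℓ)) :=
  stmt3_general R ℓ hl0 hl1
end

section
/- For the constant row weight ensemble C_{m,n,r} (uniform over all m×n binary matrices each of whose rows has Hamming weight exactly r), the average SS weight distribution satisfies S_w^{C_{m,n,r}} = C(n,w)·(1 − w·C(n−w, r−1)/C(n,r))^m for 0 ≤ w ≤ n. -/
/-- The constant row weight ensemble: `m × n` binary matrices all of whose rows
have Hamming weight exactly `r`. -/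
def constRowEnsemble (m n r : ℕ) : Finset (Fin m → Fin n → Bool) :=
  Finset.univ.filter fun H => ∀ i : Fin m, wt (H i) = r

/-!
Double counting: summing the number of weight-`w` SS vectors over the ensemble is the same as
summing, over the weight-`w` vectors `x`, the number of matrices for which `x` is an SS vector.
Rows are chosen independently, so that number is `g ^ m`, where `g` counts the weight-`r` rows
meeting `supp x` in other than exactly one position. A row meeting it exactly once is a choice of
one of the `w` positions of `supp x` and `r - 1` positions off it, so
`g = C(n, r) - w * C(n - w, r - 1)`.
-/

open Finset

section FinsetCounting

variable {α : Type*} [Fintype α] [DecidableEq α]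

theorem card_filter_card_eq_inter_eq_singleton {r : ℕ} (hr : 1 ≤ r) {T : Finset α} {j : α}
    (hj : j ∈ T) :
    #{S : Finset α | #S = r ∧ S ∩ T = {j}} = (Fintype.card α - #T).choose (r - 1) := by
  have mem_of_inter_eq {S : Finset α} (h : S ∩ T = {j}) : j ∈ S :=
    (mem_inter.1 (h ▸ mem_singleton_self j)).1
  have not_mem_of_subset_compl {U : Finset α} (h : U ⊆ Tᶜ) : j ∉ U :=
    fun hjU => mem_compl.1 (h hjU) hj
  rw [← card_compl, ← card_powersetCard]
  refine card_nbij' (·.erase j) (insert j) ?_ ?_ ?_ ?_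
  · intro S hS
    obtain ⟨hcard, hST⟩ := (mem_filter_univ S).1 hS
    refine mem_powersetCard.2 ⟨fun i hi => mem_compl.2 fun hiT => ?_, ?_⟩
    · have hi' : i ∈ S ∩ T := mem_inter.2 ⟨mem_of_mem_erase hi, hiT⟩
      exact ne_of_mem_erase hi (mem_singleton.1 (hST ▸ hi'))
    · rw [card_erase_of_mem (mem_of_inter_eq hST), hcard]
  · intro U hU
    obtain ⟨hUT, hcard⟩ := mem_powersetCard.1 hU
    refine (mem_filter_univ _).2 ⟨?_, ?_⟩
    · rw [card_insert_of_notMem (not_mem_of_subset_compl hUT)]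
      omega
    · rw [insert_inter_of_mem hj,
        disjoint_iff_inter_eq_empty.1 (subset_compl_iff_disjoint_right.1 hUT)]
      rfl
  · intro S hS
    exact insert_erase (mem_of_inter_eq ((mem_filter_univ S).1 hS).2)
  · intro U hU
    exact erase_insert (not_mem_of_subset_compl (mem_powersetCard.1 hU).1)

theorem card_filter_card_eq_card_inter_eq_one {r : ℕ} (hr : 1 ≤ r) (T : Finset α) :
    #{S : Finset α | #S = r ∧ #(S ∩ T) = 1} = #T * (Fintype.card α - #T).choose (r - 1) := by
  have fibres : ({S : Finset α | #S = r ∧ #(S ∩ T) = 1} : Finset _)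
      = T.biUnion fun j => {S : Finset α | #S = r ∧ S ∩ T = {j}} := by
    ext S
    simp only [mem_filter_univ, mem_biUnion, card_eq_one]
    constructor
    · rintro ⟨hcard, j, hj⟩
      exact ⟨j, (mem_inter.1 (hj ▸ mem_singleton_self j)).2, hcard, hj⟩
    · rintro ⟨j, -, hcard, hj⟩
      exact ⟨hcard, j, hj⟩
  rw [fibres, card_biUnion, sum_const_nat fun j hj => card_filter_card_eq_inter_eq_singleton hr hj]
  intro j _ k _ hjk
  refine disjoint_filter.2 fun S _ hj hk => hjk ?_
  exact singleton_injective (hj.2.symm.trans hk.2)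

end FinsetCounting

section BinaryVectors

variable {n : ℕ}

def supp (x : Fin n → Bool) : Finset (Fin n) := {i | x i = true}

theorem wt_eq_card_supp (x : Fin n → Bool) : wt x = #(supp x) := rfl

theorem ip_eq_card_supp_inter (h x : Fin n → Bool) : ip h x = #(supp h ∩ supp x) := by
  rw [ip, supp, supp, ← filter_and, card_filter]

theorem supp_decide_mem (S : Finset (Fin n)) : supp (fun i => decide (i ∈ S)) = S := by
  ext i
  simp [supp]

theorem card_filter_supp (p : Finset (Fin n) → Prop) [DecidablePred p] :
    #{x : Fin n → Bool | p (supp x)} = #{S : Finset (Fin n) | p S} := by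
  refine card_nbij' supp (fun S i => decide (i ∈ S)) ?_ ?_ ?_ ?_
  · intro x hx
    exact (mem_filter_univ _).2 ((mem_filter_univ x).1 hx)
  · intro S hS
    rw [mem_coe, mem_filter_univ, supp_decide_mem]
    exact (mem_filter_univ S).1 hS
  · intro x _
    funext i
    simp [supp]
  · intro S _
    exact supp_decide_mem S

theorem card_filter_wt_eq (k : ℕ) : #{x : Fin n → Bool | wt x = k} = n.choose k := by
  refine (card_filter_supp (#· = k)).trans ?_
  rw [← powerset_univ, ← powersetCard_eq_filter, card_powersetCard, card_univ, Fintype.card_fin]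

theorem card_filter_wt_eq_ip_eq_one {r : ℕ} (hr : 1 ≤ r) (x : Fin n → Bool) :
    #{h : Fin n → Bool | wt h = r ∧ ip h x = 1} = wt x * (n - wt x).choose (r - 1) := by
  simp only [wt_eq_card_supp, ip_eq_card_supp_inter]
  rw [card_filter_supp (fun S => #S = r ∧ #(S ∩ supp x) = 1),
    card_filter_card_eq_card_inter_eq_one hr, Fintype.card_fin]

theorem card_filter_wt_eq_ip_ne_one_add {r : ℕ} (hr : 1 ≤ r) (x : Fin n → Bool) :
    #{h : Fin n → Bool | wt h = r ∧ ip h x ≠ 1} + wt x * (n - wt x).choose (r - 1)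
      = n.choose r := by
  rw [← card_filter_wt_eq_ip_eq_one hr, ← card_filter_wt_eq r, ← filter_filter,
    ← filter_filter, add_comm]
  exact card_filter_add_card_filter_not _

end BinaryVectors

theorem card_filter_constRowEnsemble_ip_ne_one (m n r : ℕ) (x : Fin n → Bool) :
    #{H ∈ constRowEnsemble m n r | ∀ i, ip (H i) x ≠ 1}
      = #{h : Fin n → Bool | wt h = r ∧ ip h x ≠ 1} ^ m := by
  have : ({H ∈ constRowEnsemble m n r | ∀ i, ip (H i) x ≠ 1} : Finset _)
      = Fintype.piFinset fun _ : Fin m => {h : Fin n → Bool | wt h = r ∧ ip h x ≠ 1} := by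
    ext H
    simp [constRowEnsemble, forall_and]
  rw [this, Fintype.card_piFinset_const]

theorem sum_SSdist_constRowEnsemble (m n r w : ℕ) :
    ∑ H ∈ constRowEnsemble m n r, SSdist m n w H
      = ∑ x ∈ ({x | wt x = w} : Finset (Fin n → Bool)),
          #{h : Fin n → Bool | wt h = r ∧ ip h x ≠ 1} ^ m := by
  have := sum_card_bipartiteAbove_eq_sum_card_bipartiteBelow (s := constRowEnsemble m n r)
    (t := ({x | wt x = w} : Finset (Fin n → Bool))) (r := fun H x => ∀ i, ip (H i) x ≠ 1)
  simpa only [SSdist, bipartiteAbove, bipartiteBelow, filter_filter,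
    card_filter_constRowEnsemble_ip_ne_one] using this

theorem stmt5_general (m n r w : ℕ) (hr1 : 1 ≤ r) (hrn : r ≤ n) :
    (∑ H ∈ constRowEnsemble m n r, (SSdist m n w H : ℝ)) / (n.choose r : ℝ) ^ m
      = (n.choose w : ℝ)
        * (1 - (w : ℝ) * ((n - w).choose (r - 1) : ℝ) / (n.choose r : ℝ)) ^ m := by
  have hchoose : (n.choose r : ℝ) ≠ 0 := by exact_mod_cast (Nat.choose_pos hrn).ne'
  have good_rows : ∀ x ∈ ({x | wt x = w} : Finset (Fin n → Bool)),
      (#{h : Fin n → Bool | wt h = r ∧ ip h x ≠ 1} : ℝ)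
        = n.choose r - w * (n - w).choose (r - 1) := by
    intro x hx
    rw [← (mem_filter_univ x).1 hx, eq_sub_iff_add_eq]
    exact_mod_cast card_filter_wt_eq_ip_ne_one_add hr1 x
  rw [← Nat.cast_sum, sum_SSdist_constRowEnsemble, Nat.cast_sum,
    sum_congr rfl fun x hx => by rw [Nat.cast_pow, good_rows x hx], sum_const, card_filter_wt_eq,
    nsmul_eq_mul, mul_div_assoc, ← div_pow, sub_div, div_self hchoose]

theorem stmt5 (m n r w : ℕ) (hw : w ≤ n) (hr1 : 1 ≤ r) (hrn : r ≤ n) :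
    (∑ H ∈ constRowEnsemble m n r, (SSdist m n w H : ℝ)) / (n.choose r : ℝ) ^ m
      = (n.choose w : ℝ)
        * (1 - (w : ℝ) * ((n - w).choose (r - 1) : ℝ) / (n.choose r : ℝ)) ^ m :=
  stmt5_general m n r w hr1 hrn
end

section
/- Let x_w ∈ {0,1}^n have weight w ≥ 1. Define U = #{(h₁,h₂) ∈ ({0,1}^n)² : h₁∘x_w ≠ 1, h₂∘x_w ≠ 1, (h₁⊕h₂)∘x_w ≠ 1}, where ∘ is the integer inner product and ⊕ is coordinatewise XOR. Then U = (2^n − w·2^{n−w})² − 2^{2(n−w)+1}·Σ_{γ=2}^{w} C(w,γ)·(w−γ). -/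
/-!
The set `S = {h | h∘x = 1}` is sum-free for XOR, because
`(h₁ ⊕ h₂)∘x + 2 (h₁ ∧ h₂)∘x = h₁∘x + h₂∘x`. In a finite group `G` with a sum-free subset `S`,
inclusion–exclusion over the events `h₁ ∈ S`, `h₂ ∈ S`, `h₁ + h₂ ∈ S` (each of size `|G||S|`, each
pairwise intersection of size `|S|²`, empty triple intersection) counts the pairs avoiding all
three as `|G|² - 3|G||S| + 3|S|²`. Here `|G| = 2ⁿ` and `|S| = w 2ⁿ⁻ʷ`, and the binomial sum on
the right-hand side equals `w 2ʷ⁻¹ - w²`.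
-/

open Finset

def IsSumFree {G : Type*} [Add G] (S : Finset G) : Prop :=
  ∀ a ∈ S, ∀ b ∈ S, a + b ∉ S

section SumFree

variable {G R : Type*} [AddGroup G] [Fintype G] [CommSemiring R]

lemma sum_prod_mul_add_left (f g : G → R) :
    ∑ p : G × G, f p.1 * g (p.1 + p.2) = (∑ a, f a) * ∑ a, g a := by
  rw [Fintype.sum_prod_type, sum_mul]
  refine sum_congr rfl fun a _ => ?_
  rw [← Equiv.sum_comp (Equiv.addLeft a) g, mul_sum]
  rfl

lemma sum_prod_mul_add_right (f g : G → R) :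
    ∑ p : G × G, f p.2 * g (p.1 + p.2) = (∑ a, f a) * ∑ a, g a := by
  rw [Fintype.sum_prod_type_right, sum_mul]
  refine sum_congr rfl fun b _ => ?_
  rw [← Equiv.sum_comp (Equiv.addRight b) g, mul_sum]
  rfl

theorem IsSumFree.card_filter_pairs_avoiding [DecidableEq G] {S : Finset G} (hS : IsSumFree S) :
    (#{p : G × G | p.1 ∉ S ∧ p.2 ∉ S ∧ p.1 + p.2 ∉ S} : ℤ)
      = Fintype.card G ^ 2 - 3 * Fintype.card G * #S + 3 * #S ^ 2 := by
  set χ : G → ℤ := fun g => if g ∈ S then 1 else 0 with hχ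
  have hχS : ∑ g, χ g = #S := by simp [hχ]
  -- the cubic term `χ p.1 * χ p.2 * χ (p.1 + p.2)` of the expansion vanishes by sum-freeness
  have hpoint : ∀ p : G × G, (if p.1 ∉ S ∧ p.2 ∉ S ∧ p.1 + p.2 ∉ S then 1 else 0 : ℤ)
      = 1 - χ p.1 - χ p.2 - χ (p.1 + p.2) + χ p.1 * χ p.2
        + χ p.1 * χ (p.1 + p.2) + χ p.2 * χ (p.1 + p.2) := by
    intro p
    by_cases h₁ : p.1 ∈ S <;> by_cases h₂ : p.2 ∈ S <;> by_cases h₃ : p.1 + p.2 ∈ S <;>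
      simp_all [IsSumFree]
  have h₁ : ∑ p : G × G, χ p.1 = Fintype.card G * #S := by
    simp [Fintype.sum_prod_type, ← mul_sum, hχS, mul_comm]
  have h₂ : ∑ p : G × G, χ p.2 = Fintype.card G * #S := by
    simp [Fintype.sum_prod_type_right, ← mul_sum, hχS]
  have h₃ : ∑ p : G × G, χ (p.1 + p.2) = Fintype.card G * #S := by
    simpa [hχS] using sum_prod_mul_add_left (fun _ => (1 : ℤ)) χ
  have h₁₂ : ∑ p : G × G, χ p.1 * χ p.2 = #S * #S := by
    rw [Fintype.sum_prod_type, ← Fintype.sum_mul_sum, hχS]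
  rw [natCast_card_filter, Fintype.sum_congr _ _ hpoint]
  simp only [sum_add_distrib, sum_sub_distrib, sum_prod_mul_add_left, sum_prod_mul_add_right,
    h₁, h₂, h₃, h₁₂, hχS, sum_const, card_univ, Fintype.card_prod, nsmul_eq_mul, mul_one]
  push_cast
  ring

end SumFree

lemma filter_eq_iff_forall_eq_decide_mem {ι : Type*} [DecidableEq ι] {T A : Finset ι}
    (hA : A ⊆ T) (h : ι → Bool) :
    {i ∈ T | h i} = A ↔ ∀ j ∈ T, h j = decide (j ∈ A) := by
  constructor
  · rintro rfl j hj
    simp [hj]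
  · intro hh
    ext i
    constructor
    · intro hi
      rw [mem_filter] at hi
      simpa [hh i hi.1] using hi.2
    · intro hi
      simp [hA hi, hh i (hA hi), hi]

section Cylinders

variable {ι : Type*} [Fintype ι] [DecidableEq ι]

lemma card_filter_forall_mem_eq {β : Type*} [Fintype β] [DecidableEq β]
    (T : Finset ι) (g : ι → β) :
    #{h : ι → β | ∀ j ∈ T, h j = g j} = Fintype.card β ^ (Fintype.card ι - #T) := by
  have : ({h : ι → β | ∀ j ∈ T, h j = g j} : Finset _)
      = Fintype.piFinset fun j => if j ∈ T then {g j} else univ := by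
    ext h
    simp only [mem_filter, mem_univ, true_and, Fintype.mem_piFinset]
    refine forall_congr' fun j => ?_
    split_ifs with hj <;> simp [hj]
  rw [this, Fintype.card_piFinset, ← card_compl, ← prod_const]
  simp only [apply_ite card, card_singleton, card_univ]
  rw [prod_ite]
  simp [filter_not, compl_eq_univ_sdiff]

lemma card_filter_card_filter_eq (T : Finset ι) (k : ℕ) :
    #{h : ι → Bool | #{i ∈ T | h i} = k} = (#T).choose k * 2 ^ (Fintype.card ι - #T) := by
  rw [card_eq_sum_card_fiberwise (f := fun h => {i ∈ T | h i}) (t := T.powersetCard k)]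
  · rw [← card_powersetCard, ← smul_eq_mul, ← sum_const]
    refine sum_congr rfl fun A hA => ?_
    rw [mem_powersetCard] at hA
    rw [← Fintype.card_bool, ← card_filter_forall_mem_eq T (fun j => decide (j ∈ A))]
    congr 1
    ext h
    simp only [mem_filter, mem_univ, true_and, ← filter_eq_iff_forall_eq_decide_mem hA.1]
    exact ⟨And.right, fun hhA => ⟨hhA ▸ hA.2, hhA⟩⟩
  · intro h hh
    simpa [mem_powersetCard] using hh

end Cylinders

section InnerProduct

variable {n : ℕ}

lemma ip_eq_card_filter (h x : Fin n → Bool) : ip h x = #{i ∈ {i | x i} | h i} := by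
  rw [filter_filter, card_filter]
  simp only [ip, and_comm]

lemma card_filter_ip_eq_one (x : Fin n → Bool) :
    #{h : Fin n → Bool | ip h x = 1} = wt x * 2 ^ (n - wt x) := by
  simp only [ip_eq_card_filter, card_filter_card_filter_eq, Nat.choose_one_right, Fintype.card_fin]
  rfl

-- `Bool` is a Boolean ring: `+` is `xor` and `*` is `and`.
lemma ip_add_add_two_mul_ip_mul (h₁ h₂ x : Fin n → Bool) :
    ip (h₁ + h₂) x + 2 * ip (h₁ * h₂) x = ip h₁ x + ip h₂ x := by
  simp only [ip, mul_sum, ← sum_add_distrib]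
  refine sum_congr rfl fun i _ => ?_
  have key : ∀ a b c : Bool, ((if a + b ∧ c then 1 else 0) + 2 * (if a * b ∧ c then 1 else 0) : ℕ)
      = (if a ∧ c then 1 else 0) + (if b ∧ c then 1 else 0) := by decide
  exact key _ _ _

lemma isSumFree_filter_ip_eq_one (x : Fin n → Bool) :
    IsSumFree ({h | ip h x = 1} : Finset (Fin n → Bool)) := by
  simp only [IsSumFree, mem_filter, mem_univ, true_and]
  intro h₁ h₁x h₂ h₂x
  have := ip_add_add_two_mul_ip_mul h₁ h₂ x
  omega

end InnerProduct

lemma sum_Icc_two_choose_mul_sub (w : ℕ) (hw : 1 ≤ w) :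
    ∑ γ ∈ Icc 2 w, (w.choose γ : ℤ) * (w - γ) = w * 2 ^ (w - 1) - w ^ 2 := by
  have hfull : ∑ γ ∈ range (w + 1), (w.choose γ : ℤ) * (w - γ) = w * 2 ^ w - w * 2 ^ (w - 1) := by
    have h₁ := congrArg (Nat.cast (R := ℤ)) (Nat.sum_range_choose w)
    have h₂ := congrArg (Nat.cast (R := ℤ)) (Nat.sum_range_mul_choose w)
    push_cast at h₁ h₂
    simp only [mul_sub, sum_sub_distrib, ← sum_mul, h₁]
    rw [← h₂, mul_comm (2 ^ w : ℤ)]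
    exact congrArg _ (sum_congr rfl fun _ _ => mul_comm _ _)
  rw [← sum_range_add_sum_Ico _ (by omega : 2 ≤ w + 1), Ico_add_one_right_eq_Icc] at hfull
  obtain ⟨m, rfl⟩ : ∃ m, w = m + 1 := ⟨w - 1, by omega⟩
  simp only [sum_range_succ, sum_range_zero, Nat.choose_zero_right, Nat.choose_one_right,
    pow_succ] at hfull
  push_cast at hfull ⊢
  linear_combination hfull

theorem stmt9 (n w : ℕ) (hw1 : 1 ≤ w) (hwn : w ≤ n) (x : Fin n → Bool) (hx : wt x = w) :
    ((Finset.univ.filter fun p : (Fin n → Bool) × (Fin n → Bool) =>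
        ip p.1 x ≠ 1 ∧ ip p.2 x ≠ 1 ∧ ip (fun i => xor (p.1 i) (p.2 i)) x ≠ 1).card : ℤ)
      = ((2 : ℤ) ^ n - (w : ℤ) * 2 ^ (n - w)) ^ 2
        - 2 ^ (2 * (n - w) + 1) * ∑ γ ∈ Finset.Icc 2 w, (w.choose γ : ℤ) * ((w : ℤ) - γ) := by
  set S : Finset (Fin n → Bool) := {h | ip h x = 1}
  have hfilter : (univ.filter fun p : (Fin n → Bool) × (Fin n → Bool) =>
        ip p.1 x ≠ 1 ∧ ip p.2 x ≠ 1 ∧ ip (fun i => xor (p.1 i) (p.2 i)) x ≠ 1)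
      = ({p | p.1 ∉ S ∧ p.2 ∉ S ∧ p.1 + p.2 ∉ S} : Finset _) := by
    ext p
    simp only [S, mem_filter, mem_univ, true_and]
    rfl
  rw [hfilter, (isSumFree_filter_ip_eq_one x).card_filter_pairs_avoiding, card_filter_ip_eq_one,
    hx, sum_Icc_two_choose_mul_sub w hw1, Fintype.card_fun, Fintype.card_bool, Fintype.card_fin]
  obtain ⟨a, rfl⟩ : ∃ a, n = a + w := ⟨n - w, by omega⟩
  obtain ⟨m, rfl⟩ : ∃ m, w = m + 1 := ⟨w - 1, by omega⟩
  simp only [Nat.add_sub_cancel]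
  push_cast
  ring
end

section
/- Let V = #{(h₁,h₂) ∈ ({0,1}^n)² : h₁∘x_w ≠ 1, h₂∘x_w ≠ 1, (h₁⊕h₂)∘x_w = 1}, where x_w has weight w ≥ 1 and ∘ is the integer inner product, ⊕ is coordinatewise XOR. Then V = 2^{2(n−w)+1}·Σ_{γ=2}^{w} C(w,γ)·(w−γ). -/
open Finset
open scoped symmDiff

namespace Finset

variable {α : Type*} [DecidableEq α]

lemma card_symmDiff_eq_one_iff {a b : Finset α} : #(a ∆ b) = 1 ↔ a ⋖ b ∨ b ⋖ a := by
  have hcard : #(a ∆ b) = #(a \ b) + #(b \ a) :=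
    card_union_of_disjoint disjoint_sdiff_sdiff
  rw [covBy_iff_card_sdiff_eq_one, covBy_iff_card_sdiff_eq_one, hcard,
    ← sdiff_eq_empty_iff_subset, ← sdiff_eq_empty_iff_subset, ← card_eq_zero,
    ← card_eq_zero]
  omega

lemma card_ne_one_and_card_symmDiff_eq_one_iff {a b : Finset α} :
    #a ≠ 1 ∧ #b ≠ 1 ∧ #(a ∆ b) = 1 ↔ 2 ≤ #a ∧ a ⋖ b ∨ 2 ≤ #b ∧ b ⋖ a := by
  have card_succ {s t : Finset α} (h : s ⋖ t) : #t = #s + 1 :=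
    (Nat.covBy_iff_add_one_eq.1 h.card_finset).symm
  rw [card_symmDiff_eq_one_iff]
  constructor
  · rintro ⟨ha, hb, hab | hba⟩
    · exact Or.inl ⟨by have := card_succ hab; omega, hab⟩
    · exact Or.inr ⟨by have := card_succ hba; omega, hba⟩
  · rintro (⟨ha, hab⟩ | ⟨hb, hba⟩)
    · exact ⟨by omega, by have := card_succ hab; omega, Or.inl hab⟩
    · exact ⟨by have := card_succ hba; omega, by omega, Or.inr hba⟩

variable [Fintype α]

open scoped Classical in
lemma card_filter_covBy (a : Finset α) : #{b | a ⋖ b} = Fintype.card α - #a := by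
  have : ({b | a ⋖ b} : Finset (Finset α)) = aᶜ.image (insert · a) := by
    ext b
    simp [covBy_iff_exists_insert]
  rw [this, card_image_of_injOn, card_compl]
  intro j hj k _ hjk
  exact (insert_inj (mem_compl.1 hj)).1 hjk

open scoped Classical in
lemma card_filter_two_le_covBy :
    #{q : Finset α × Finset α | 2 ≤ #q.1 ∧ q.1 ⋖ q.2} =
      ∑ γ ∈ Icc 2 (Fintype.card α), (Fintype.card α).choose γ * (Fintype.card α - γ) := by
  set w := Fintype.card α
  calc #{q : Finset α × Finset α | 2 ≤ #q.1 ∧ q.1 ⋖ q.2}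
      = ∑ a : Finset α, if 2 ≤ #a then w - #a else 0 := by
        rw [card_filter, Fintype.sum_prod_type]
        refine sum_congr rfl fun a _ => ?_
        split_ifs with ha
        · simp only [ha, true_and]
          rw [← card_filter_covBy, card_filter]
        · simp [ha]
    _ = ∑ γ ∈ range (w + 1), w.choose γ * if 2 ≤ γ then w - γ else 0 := by
        rw [← powerset_univ, sum_powerset_apply_card (fun k => if 2 ≤ k then w - k else 0),
          card_univ]
        rfl
    _ = ∑ γ ∈ Icc 2 w, w.choose γ * (w - γ) := by
        simp only [mul_ite, mul_zero]
        rw [← sum_filter]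
        congr 1
        ext γ
        simp only [mem_filter, mem_range, mem_Icc]
        omega

theorem card_filter_card_symmDiff_eq_one :
    #{q : Finset α × Finset α | #q.1 ≠ 1 ∧ #q.2 ≠ 1 ∧ #(q.1 ∆ q.2) = 1} =
      2 * ∑ γ ∈ Icc 2 (Fintype.card α),
        (Fintype.card α).choose γ * (Fintype.card α - γ) := by
  classical
  have hswap : #{q : Finset α × Finset α | 2 ≤ #q.2 ∧ q.2 ⋖ q.1} =
      #{q : Finset α × Finset α | 2 ≤ #q.1 ∧ q.1 ⋖ q.2} :=
    card_equiv (Equiv.prodComm _ _) (by simp)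
  have hdisj : Disjoint (α := Finset (Finset α × Finset α)) {q | 2 ≤ #q.1 ∧ q.1 ⋖ q.2}
      {q | 2 ≤ #q.2 ∧ q.2 ⋖ q.1} :=
    disjoint_filter.2 fun q _ h h' => h.2.lt.asymm h'.2.lt
  rw [filter_congr fun q _ => card_ne_one_and_card_symmDiff_eq_one_iff, filter_or,
    card_union_of_disjoint hdisj, hswap, card_filter_two_le_covBy, two_mul]

end Finset

lemma card_filter_fst_comp_equiv {α β γ : Type*} [Fintype α] [Fintype β] [Fintype γ]
    (e : α ≃ β × γ) (P : β → Prop) [DecidablePred P] :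
    #{a | P (e a).1} = #{b | P b} * Fintype.card γ := by
  rw [card_equiv e (t := {q : β × γ | P q.1}) (by simp), ← univ_product_univ,
    filter_product_left, card_product, card_univ]

section BoolFun

variable {ι : Type*} [Fintype ι] [DecidableEq ι]

variable (ι) in
def boolFunEquivFinset : (ι → Bool) ≃ Finset ι where
  toFun u := {i | u i}
  invFun s i := decide (i ∈ s)
  left_inv u := by ext; simp
  right_inv s := by ext; simp

lemma boolFunEquivFinset_xor (u v : ι → Bool) :
    boolFunEquivFinset ι (fun i => xor (u i) (v i)) =
      boolFunEquivFinset ι u ∆ boolFunEquivFinset ι v := by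
  ext i
  simp only [boolFunEquivFinset, Equiv.coe_fn_mk, mem_symmDiff, mem_filter_univ]
  cases u i <;> cases v i <;> simp

def supportSplitEquiv (x : ι → Bool) :
    (ι → Bool) ≃ Finset {i // x i} × ({i // ¬ x i} → Bool) :=
  (Equiv.piEquivPiSubtypeProd (fun i => x i = true) fun _ => Bool).trans
    ((boolFunEquivFinset _).prodCongr (Equiv.refl _))

lemma supportSplitEquiv_xor_fst (x u v : ι → Bool) :
    (supportSplitEquiv x fun i => xor (u i) (v i)).1 =
      (supportSplitEquiv x u).1 ∆ (supportSplitEquiv x v).1 :=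
  boolFunEquivFinset_xor _ _

end BoolFun

lemma ip_eq_card_supportSplitEquiv_fst {n : ℕ} (h x : Fin n → Bool) :
    ip h x = #(supportSplitEquiv x h).1 := by
  rw [ip, ← card_filter, ← card_map (Function.Embedding.subtype _)]
  congr 1
  ext i
  simp [supportSplitEquiv, boolFunEquivFinset]

theorem stmt10_general (n w : ℕ) (x : Fin n → Bool) (hx : wt x = w) :
    ((Finset.univ.filter fun p : (Fin n → Bool) × (Fin n → Bool) =>
        ip p.1 x ≠ 1 ∧ ip p.2 x ≠ 1 ∧ ip (fun i => xor (p.1 i) (p.2 i)) x = 1).card : ℤ)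
      = 2 ^ (2 * (n - w) + 1) * ∑ γ ∈ Finset.Icc 2 w, (w.choose γ : ℤ) * ((w : ℤ) - γ) := by
  set E := supportSplitEquiv x
  have hsupp : Fintype.card {i // x i} = w := by rw [Fintype.card_subtype]; exact hx
  have hoff : Fintype.card {i // ¬ x i} = n - w := by
    rw [Fintype.card_subtype_compl, hsupp, Fintype.card_fin]
  have hcount := card_filter_fst_comp_equiv
    ((E.prodCongr E).trans (Equiv.prodProdProdComm _ _ _ _))
    fun q => #q.1 ≠ 1 ∧ #q.2 ≠ 1 ∧ #(q.1 ∆ q.2) = 1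
  simp only [Equiv.trans_apply, Equiv.prodCongr_apply, Prod.map, Equiv.prodProdProdComm_apply,
    ← supportSplitEquiv_xor_fst, ← ip_eq_card_supportSplitEquiv_fst, E] at hcount
  have hsum : ((∑ γ ∈ Icc 2 w, w.choose γ * (w - γ) : ℕ) : ℤ) =
      ∑ γ ∈ Icc 2 w, (w.choose γ : ℤ) * ((w : ℤ) - γ) := by
    push_cast
    exact sum_congr rfl fun γ hγ => by rw [Nat.cast_sub (mem_Icc.1 hγ).2]
  rw [hcount, card_filter_card_symmDiff_eq_one, hsupp, Fintype.card_prod, Fintype.card_fun,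
    hoff, Fintype.card_bool]
  push_cast [hsum]
  ring

theorem stmt10 (n w : ℕ) (hw1 : 1 ≤ w) (hwn : w ≤ n) (x : Fin n → Bool) (hx : wt x = w) :
    ((Finset.univ.filter fun p : (Fin n → Bool) × (Fin n → Bool) =>
        ip p.1 x ≠ 1 ∧ ip p.2 x ≠ 1 ∧ ip (fun i => xor (p.1 i) (p.2 i)) x = 1).card : ℤ)
      = 2 ^ (2 * (n - w) + 1) * ∑ γ ∈ Finset.Icc 2 w, (w.choose γ : ℤ) * ((w : ℤ) - γ) :=
  stmt10_general n w x hx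
end

section
/- The number of K×N binary matrices G whose generated code has minimum distance at least 2 is at most 2^{KN}·(1 − N·2^{−N}) / ((2^K − 1)·N·2^{−N} + 1 − N·2^{−N}). -/
/-- The F₂-linear combination of the rows of `G` with coefficient vector `m`. -/
def rowComb {K N : ℕ} (m : Fin K → ZMod 2) (G : Fin K → Fin N → ZMod 2) :
    Fin N → ZMod 2 := fun j => ∑ i, m i * G i j

/-- Hamming weight of a vector over F₂. -/
def wt2 {N : ℕ} (c : Fin N → ZMod 2) : ℕ :=
  (Finset.univ.filter fun j => c j = 1).card

/-- The minimum distance of the code generated by `G` is at least 2. -/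
def dminGe2 {K N : ℕ} (G : Fin K → Fin N → ZMod 2) : Prop :=
  ∀ m : Fin K → ZMod 2, m ≠ 0 → wt2 (rowComb m G) ≠ 1

instance {K N : ℕ} (G : Fin K → Fin N → ZMod 2) : Decidable (dminGe2 G) := by
  unfold dminGe2; infer_instance
/-!
Let `A₁(G)` count the nonzero messages `m` whose codeword `mG` has weight one, so that
`d_min(G) ≥ 2` iff `A₁(G) = 0`. For uniformly random `G`, the codeword `mG` is uniform for every
`m ≠ 0`, and `(mG, m'G)` is uniform for distinct nonzero `m, m'` (over `F₂` they are linearly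
independent). This gives the first two moments of `A₁`, and Cauchy–Schwarz on the support of `A₁`
(the second-moment method `Pr[X = 0] ≤ (E[X²] - E[X]²) / E[X²]`) gives the bound.
-/

open Finset

lemma card_filter_comp_mul_card_of_surjective {V W : Type*} [AddGroup V] [AddMonoid W]
    [Fintype V] [Fintype W] [DecidableEq W] (f : V →+ W) (hf : Function.Surjective f)
    (p : W → Prop) [DecidablePred p] :
    #{v | p (f v)} * Fintype.card W = #{w | p w} * Fintype.card V := by
  have hfiber (w : W) : #{v | f v = w} = #{v | f v = 0} :=
    AddMonoidHom.card_fiber_eq_of_mem_range f (hf w) (hf 0)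
  have hV : Fintype.card V = Fintype.card W * #{v | f v = 0} := by
    rw [← card_univ, card_eq_sum_card_fiberwise (t := univ) fun v _ => mem_univ (f v)]
    simp [hfiber]
  have hp : #{v | p (f v)} = #{w | p w} * #{v | f v = 0} := by
    rw [card_eq_sum_card_fiberwise (t := {w | p w}) fun v hv => by simpa using hv]
    rw [← smul_eq_mul, ← sum_const]
    refine sum_congr rfl fun w hw => ?_
    rw [← hfiber w, filter_filter]
    congr 1
    ext v
    simp only [mem_filter, mem_univ, true_and] at hw ⊢
    exact ⟨And.right, fun h => ⟨h ▸ hw, h⟩⟩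
  rw [hV, hp]; ring

lemma card_filter_eq_zero_le_sub_sq_sum_div {Ω : Type*} [Fintype Ω] (f : Ω → ℝ) :
    (#{ω | f ω = 0} : ℝ) ≤ Fintype.card Ω - (∑ ω, f ω) ^ 2 / ∑ ω, f ω ^ 2 := by
  have hcard : (#{ω | f ω = 0} : ℝ) + #{ω | f ω ≠ 0} = Fintype.card Ω := by
    exact_mod_cast card_filter_add_card_filter_not (s := univ) (fun ω => f ω = 0)
  have hcs : (∑ ω, f ω) ^ 2 ≤ #{ω | f ω ≠ 0} * ∑ ω, f ω ^ 2 := by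
    rw [← sum_filter_ne_zero, ← sum_filter_of_ne (p := fun ω => f ω ≠ 0) (s := univ)
      (f := fun ω => f ω ^ 2) fun ω _ h => by simpa using h]
    exact sq_sum_le_card_mul_sum_sq
  rcases (sum_nonneg fun ω _ => sq_nonneg (f ω) : 0 ≤ ∑ ω, f ω ^ 2).eq_or_lt with h0 | hpos
  · rw [← h0, div_zero]; linarith [(#{ω | f ω ≠ 0}).cast_nonneg (α := ℝ)]
  · have := (div_le_iff₀ hpos).2 hcs
    linarith

lemma card_filter_eq_zero_le_of_moments {Ω : Type*} [Fintype Ω] (f : Ω → ℝ) {m₁ m₂ : ℝ}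
    (h₁ : ∑ ω, f ω = Fintype.card Ω * m₁) (h₂ : ∑ ω, f ω ^ 2 = Fintype.card Ω * m₂)
    (hm₂ : 0 < m₂) :
    (#{ω | f ω = 0} : ℝ) ≤ Fintype.card Ω * ((m₂ - m₁ ^ 2) / m₂) := by
  rcases (Fintype.card Ω).eq_zero_or_pos with hΩ | hΩ
  · simp [Fintype.card_eq_zero_iff.1 hΩ]
  · have h := card_filter_eq_zero_le_sub_sq_sum_div f
    rw [h₁, h₂] at h
    convert h using 1
    field_simp

lemma exists_dotProduct_eq_pair {R ι : Type*} [CommRing R] [Fintype ι] [DecidableEq ι]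
    {m m' : ι → R} {i₀ i₁ : ι} (h₀ : m i₀ = 1) (h₀' : m' i₀ = 0) (h₁' : m' i₁ = 1) (b b' : R) :
    ∃ v, m ⬝ᵥ v = b ∧ m' ⬝ᵥ v = b' :=
  ⟨Pi.single i₀ (b - b' * m i₁) + Pi.single i₁ b', by
    simp only [dotProduct_add, dotProduct_single, h₀, h₀', h₁']; constructor <;> ring⟩

namespace ZMod

lemma eq_one_of_ne_zero {x : ZMod 2} : x ≠ 0 → x = 1 := by revert x; decide

lemma eq_zero_of_ne_one {x : ZMod 2} : x ≠ 1 → x = 0 := by revert x; decide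

lemma exists_eq_one_of_ne_zero {ι : Type*} {m : ι → ZMod 2} (hm : m ≠ 0) : ∃ i, m i = 1 :=
  (Function.ne_iff.1 hm).imp fun _ => eq_one_of_ne_zero

lemma exists_dotProduct_eq {ι : Type*} [Fintype ι] [DecidableEq ι] {m : ι → ZMod 2}
    (hm : m ≠ 0) (b : ZMod 2) : ∃ v, m ⬝ᵥ v = b := by
  obtain ⟨i, hi⟩ := exists_eq_one_of_ne_zero hm
  exact ⟨Pi.single i b, by rw [dotProduct_single, hi, one_mul]⟩

lemma exists_dotProduct_eq_pair {ι : Type*} [Fintype ι] [DecidableEq ι] {m m' : ι → ZMod 2}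
    (hm : m ≠ 0) (hm' : m' ≠ 0) (hne : m ≠ m') (b b' : ZMod 2) :
    ∃ v, m ⬝ᵥ v = b ∧ m' ⬝ᵥ v = b' := by
  obtain ⟨i₀, hi₀⟩ := Function.ne_iff.1 hne
  have hsplit : ∀ x y : ZMod 2, x ≠ y → x = 1 ∧ y = 0 ∨ x = 0 ∧ y = 1 := by decide
  rcases hsplit _ _ hi₀ with ⟨h₀, h₀'⟩ | ⟨h₀, h₀'⟩
  · obtain ⟨i₁, h₁'⟩ := exists_eq_one_of_ne_zero hm'
    exact _root_.exists_dotProduct_eq_pair h₀ h₀' h₁' b b'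
  · obtain ⟨i₁, h₁⟩ := exists_eq_one_of_ne_zero hm
    exact (_root_.exists_dotProduct_eq_pair h₀' h₀ h₁ b' b).imp fun _ => And.symm

end ZMod

lemma wt2_eq_one_iff {N : ℕ} {c : Fin N → ZMod 2} : wt2 c = 1 ↔ ∃ j, Pi.single j 1 = c := by
  constructor
  · intro h
    obtain ⟨j, hj⟩ := card_eq_one.1 h
    have hc (j' : Fin N) : c j' = 1 ↔ j' = j := by
      simpa using congrArg (j' ∈ ·) hj
    refine ⟨j, funext fun j' => ?_⟩
    by_cases h' : j' = j
    · subst h'; simp [(hc j').2 rfl]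
    · rw [Pi.single_eq_of_ne h', ZMod.eq_zero_of_ne_one (mt (hc j').1 h')]
  · rintro ⟨j, rfl⟩
    rw [wt2, card_eq_one]
    exact ⟨j, by ext j'; simp [Pi.single_apply]⟩

lemma card_wt2_eq_one (N : ℕ) : #{c : Fin N → ZMod 2 | wt2 c = 1} = N := by
  have hinj : Function.Injective fun j : Fin N => (Pi.single j 1 : Fin N → ZMod 2) :=
    fun j j' h => by simpa [Pi.single_apply] using congrFun h j
  have hset : ({c | wt2 c = 1} : Finset (Fin N → ZMod 2)) = univ.image (Pi.single · 1) := by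
    ext c; simp [wt2_eq_one_iff]
  rw [hset, card_image_of_injective _ hinj, card_univ, Fintype.card_fin]

section

variable {K N : ℕ}

lemma card_generatorMatrix : Fintype.card (Fin K → Fin N → ZMod 2) = 2 ^ (K * N) := by
  simp [← pow_mul, mul_comm]

lemma card_univ_erase_zero : (#(univ.erase (0 : Fin K → ZMod 2)) : ℝ) = 2 ^ K - 1 := by
  rw [eq_sub_iff_add_eq]
  exact_mod_cast (card_erase_add_one (mem_univ _)).trans (by simp [ZMod.card])

def rowCombHom (m : Fin K → ZMod 2) : (Fin K → Fin N → ZMod 2) →+ (Fin N → ZMod 2) :=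
  AddMonoidHom.mk' (rowComb m) fun G G' => Matrix.vecMul_add G G' m

lemma rowCombHom_surjective {m : Fin K → ZMod 2} (hm : m ≠ 0) :
    Function.Surjective (rowCombHom (N := N) m) := by
  choose v hv using ZMod.exists_dotProduct_eq hm
  exact fun c => ⟨fun i j => v (c j) i, funext fun j => hv (c j)⟩

lemma rowCombHom_prod_surjective {m m' : Fin K → ZMod 2} (hm : m ≠ 0) (hm' : m' ≠ 0)
    (hne : m ≠ m') : Function.Surjective ((rowCombHom (N := N) m).prod (rowCombHom m')) := by
  choose v hv using ZMod.exists_dotProduct_eq_pair hm hm' hne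
  exact fun c => ⟨fun i j => v (c.1 j) (c.2 j) i,
    Prod.ext (funext fun j => (hv _ _).1) (funext fun j => (hv _ _).2)⟩

lemma card_wt2_rowComb_eq_one {m : Fin K → ZMod 2} (hm : m ≠ 0) :
    (#{G : Fin K → Fin N → ZMod 2 | wt2 (rowComb m G) = 1} : ℝ) = N * 2 ^ (K * N) / 2 ^ N := by
  have h : #{G : Fin K → Fin N → ZMod 2 | wt2 (rowComb m G) = 1} * Fintype.card (Fin N → ZMod 2)
      = #{c : Fin N → ZMod 2 | wt2 c = 1} * Fintype.card (Fin K → Fin N → ZMod 2) :=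
    card_filter_comp_mul_card_of_surjective _ (rowCombHom_surjective hm) fun c => wt2 c = 1
  rw [card_wt2_eq_one, card_generatorMatrix, Fintype.card_fun, ZMod.card, Fintype.card_fin] at h
  rw [eq_div_iff (by positivity)]
  exact_mod_cast h

lemma card_wt2_rowComb_eq_one_and {m m' : Fin K → ZMod 2} (hm : m ≠ 0) (hm' : m' ≠ 0)
    (hne : m ≠ m') :
    (#{G : Fin K → Fin N → ZMod 2 | wt2 (rowComb m G) = 1 ∧ wt2 (rowComb m' G) = 1} : ℝ)
      = N ^ 2 * 2 ^ (K * N) / (2 ^ N) ^ 2 := by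
  have h : #{G : Fin K → Fin N → ZMod 2 | wt2 (rowComb m G) = 1 ∧ wt2 (rowComb m' G) = 1}
        * Fintype.card ((Fin N → ZMod 2) × (Fin N → ZMod 2))
      = #{c : (Fin N → ZMod 2) × (Fin N → ZMod 2) | wt2 c.1 = 1 ∧ wt2 c.2 = 1}
        * Fintype.card (Fin K → Fin N → ZMod 2) :=
    card_filter_comp_mul_card_of_surjective _ (rowCombHom_prod_surjective hm hm' hne)
      fun c => wt2 c.1 = 1 ∧ wt2 c.2 = 1
  rw [← univ_product_univ, filter_product (fun c => wt2 c = 1) (fun c => wt2 c = 1), card_product,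
    card_wt2_eq_one, card_generatorMatrix, Fintype.card_prod, Fintype.card_fun, ZMod.card,
    Fintype.card_fin] at h
  rw [eq_div_iff (by positivity)]
  exact_mod_cast (by rw [sq, sq, h])

/-- The paper's `A₁(G)`. -/
def weightOneCount (G : Fin K → Fin N → ZMod 2) : ℕ :=
  #{m ∈ univ.erase 0 | wt2 (rowComb m G) = 1}

lemma weightOneCount_eq_zero_iff {G : Fin K → Fin N → ZMod 2} :
    weightOneCount G = 0 ↔ dminGe2 G := by
  simp [weightOneCount, dminGe2, filter_eq_empty_iff]

lemma sum_weightOneCount :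
    ∑ G : Fin K → Fin N → ZMod 2, (weightOneCount G : ℝ)
      = 2 ^ (K * N) * ((2 ^ K - 1) * N / 2 ^ N) := by
  have hswap : ∑ G : Fin K → Fin N → ZMod 2, weightOneCount G
      = ∑ m ∈ univ.erase 0, #{G : Fin K → Fin N → ZMod 2 | wt2 (rowComb m G) = 1} :=
    sum_card_bipartiteAbove_eq_sum_card_bipartiteBelow _
  rw [← Nat.cast_sum, hswap, Nat.cast_sum,
    sum_congr rfl fun m hm => card_wt2_rowComb_eq_one (ne_of_mem_erase hm), sum_const,
    nsmul_eq_mul, card_univ_erase_zero]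
  ring

lemma sum_weightOneCount_sq :
    ∑ G : Fin K → Fin N → ZMod 2, (weightOneCount G : ℝ) ^ 2
      = 2 ^ (K * N) * (((2 ^ K - 1) * N / 2 ^ N) ^ 2
          + (2 ^ K - 1) * N / 2 ^ N * (1 - N / 2 ^ N)) := by
  set S := univ.erase (0 : Fin K → ZMod 2)
  have hswap : ∑ G : Fin K → Fin N → ZMod 2, weightOneCount G ^ 2
      = ∑ x ∈ S ×ˢ S, #{G : Fin K → Fin N → ZMod 2 |
          wt2 (rowComb x.1 G) = 1 ∧ wt2 (rowComb x.2 G) = 1} := by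
    refine (sum_congr rfl fun G _ => ?_).trans
      (sum_card_bipartiteAbove_eq_sum_card_bipartiteBelow _)
    rw [sq, weightOneCount, ← card_product, ← filter_product]
    rfl
  have hdiag : ∀ x ∈ S.diag, (#{G : Fin K → Fin N → ZMod 2 |
      wt2 (rowComb x.1 G) = 1 ∧ wt2 (rowComb x.2 G) = 1} : ℝ) = N * 2 ^ (K * N) / 2 ^ N := by
    intro x hx
    obtain ⟨hm, hx⟩ := mem_diag.1 hx
    simpa [← hx] using card_wt2_rowComb_eq_one (N := N) (ne_of_mem_erase hm)
  have hoffDiag : ∀ x ∈ S.offDiag, (#{G : Fin K → Fin N → ZMod 2 |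
      wt2 (rowComb x.1 G) = 1 ∧ wt2 (rowComb x.2 G) = 1} : ℝ)
        = N ^ 2 * 2 ^ (K * N) / (2 ^ N) ^ 2 := fun x hx =>
    have ⟨hm, hm', hne⟩ := mem_offDiag.1 hx
    card_wt2_rowComb_eq_one_and (ne_of_mem_erase hm) (ne_of_mem_erase hm') hne
  rw [← diag_union_offDiag, sum_union (disjoint_diag_offDiag S)] at hswap
  have hcast := congrArg (Nat.cast : ℕ → ℝ) hswap
  push_cast at hcast
  rw [hcast, sum_congr rfl hdiag, sum_congr rfl hoffDiag,
    sum_const, sum_const, nsmul_eq_mul, nsmul_eq_mul, diag_card, offDiag_card,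
    Nat.cast_sub (Nat.le_mul_self _), Nat.cast_mul, card_univ_erase_zero]
  field_simp
  ring

end

theorem stmt16 (K N : ℕ) (hK : 1 ≤ K) (hKN : K < N) :
    ((Finset.univ.filter fun G : Fin K → Fin N → ZMod 2 => dminGe2 G).card : ℝ)
      ≤ 2 ^ (K * N) * (1 - (N : ℝ) * 2 ^ (-(N : ℝ)))
          / (((2 : ℝ) ^ K - 1) * N * 2 ^ (-(N : ℝ)) + 1 - (N : ℝ) * 2 ^ (-(N : ℝ))) := by
  set μ : ℝ := ((2 : ℝ) ^ K - 1) * N / 2 ^ N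
  set d : ℝ := 1 - (N : ℝ) / 2 ^ N
  have hμ : 0 < μ := by
    have : (1 : ℝ) < 2 ^ K := one_lt_pow₀ one_lt_two (by omega)
    have : (0 : ℝ) < N := by exact_mod_cast (by omega : 0 < N)
    positivity
  have hd : 0 < d := by
    rw [sub_pos, div_lt_one (by positivity)]
    exact_mod_cast Nat.lt_two_pow_self
  have hcard : (Fintype.card (Fin K → Fin N → ZMod 2) : ℝ) = 2 ^ (K * N) := by
    rw [card_generatorMatrix]; push_cast; rfl
  have hzero : #{G : Fin K → Fin N → ZMod 2 | dminGe2 G}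
      = #{G : Fin K → Fin N → ZMod 2 | (weightOneCount G : ℝ) = 0} := by
    simp [weightOneCount_eq_zero_iff]
  have hrpow : (N : ℝ) * 2 ^ (-(N : ℝ)) = N / 2 ^ N := by
    rw [Real.rpow_neg zero_le_two, Real.rpow_natCast, div_eq_mul_inv]
  calc (#{G : Fin K → Fin N → ZMod 2 | dminGe2 G} : ℝ)
      ≤ 2 ^ (K * N) * ((μ ^ 2 + μ * d - μ ^ 2) / (μ ^ 2 + μ * d)) := by
        rw [hzero, ← hcard]
        exact card_filter_eq_zero_le_of_moments _ (hcard ▸ sum_weightOneCount)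
          (hcard ▸ sum_weightOneCount_sq) (by positivity)
    _ = _ := by
        have hden : ((2 : ℝ) ^ K - 1) * (N / 2 ^ N) + 1 - N / 2 ^ N = μ + d := by ring
        rw [mul_assoc _ (N : ℝ), hrpow, hden, show 1 - (N : ℝ) / 2 ^ N = d from rfl]
        field_simp [(add_pos hμ hd).ne']
        ring
end
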